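/- Let N ≥ 3, μ > 0, α < 0, let j be an integer with 0 ≤ j ≤ ⌊(N-1)/2⌋, and let ω > α²/(N-2j)². Then the stationary state Φ_ω^j (whose first j components equal φ_{ω, a^j} and whose remaining N-j components equal φ_{ω, -a^j}, with a^j = (1/(μ√ω)) arctanh(|α|/((N-2j)√ω))) satisfies: each component solves -φ'' - |φ|^{2μ} φ = -ω φ on (0,∞), all components have the same value at 0, and Σ_{i=1}^N (Φ_ω^j)_i′(0) = α (Φ_ω^j)_1(0). Consequently Ψ_t = e^{iωt} Φ_ω^j is a standing wave: each component of Ψ_t solves i ∂ψ/∂t = -∂²ψ/∂x² - |ψ|^{2μ} ψ on (0,∞) for all t. -/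

import Mathlib

open Real MeasureTheory

/-- `sech y = 1 / cosh y`. -/
noncomputable def sech (y : ℝ) : ℝ := 1 / Real.cosh y

/-- Inverse hyperbolic tangent. -/
noncomputable def artanh (x : ℝ) : ℝ := (1 / 2) * Real.log ((1 + x) / (1 - x))

/-- The half-line soliton profile `φ_{ω,a}(x) = [(μ+1)ω]^{1/(2μ)} sech^{1/μ}(μ√ω (x-a))`. -/
noncomputable def solProfile (μ ω a : ℝ) (x : ℝ) : ℝ :=
  ((μ + 1) * ω) ^ (1 / (2 * μ)) * sech (μ * Real.sqrt ω * (x - a)) ^ (1 / μ)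

/-- `a^j = (1/(μ√ω)) arctanh(|α|/((N-2j)√ω))`. -/
noncomputable def aCenter (μ α : ℝ) (N j : ℕ) (ω : ℝ) : ℝ :=
  (1 / (μ * Real.sqrt ω)) * _root_.artanh (|α| / (((N : ℝ) - 2 * j) * Real.sqrt ω))

/-- The stationary state `Φ_ω^j` with `j` bumps: its first `j` components are `φ_{ω, a^j}` and
the remaining `N - j` components are `φ_{ω, -a^j}`. -/
noncomputable def statState (μ α : ℝ) (N j : ℕ) (ω : ℝ) : Fin N → ℝ → ℝ := fun i =>
  if (i : ℕ) < j then solProfile μ ω (aCenter μ α N j ω)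
  else solProfile μ ω (-(aCenter μ α N j ω))

/-! With `u = μ√ω (x - a)` the profile is `φ = c · cosh(u)^(-1/μ)` where `c^(2μ) = (μ+1)ω`, so
`φ' = -√ω tanh(u) φ` and `φ^(2μ) = (μ+1)ω (1 - tanh² u)`; differentiating once more gives
`φ'' = ω φ - φ^(2μ) φ`. At the vertex the profiles centred at `±a` take the same value and have
opposite slopes `±√ω tanh(μ√ω a) φ(0)`, so the `j` bumps and `N - j` tails contribute
`-(N - 2j) √ω tanh(μ√ω a^j) φ(0)`, and `a^j` is chosen exactly so that
`(N - 2j) √ω tanh(μ√ω a^j) = |α| = -α`. Finally, multiplying a real solution of the stationary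
equation by `e^{iωt}` turns its `-ω φ` term into `i ∂ₜ`. -/

lemma artanh_eq_real_artanh {x : ℝ} (hx : x ∈ Set.Icc (-1) 1) : _root_.artanh x = Real.artanh x :=
  (Real.artanh_eq_half_log hx).symm

lemma Real.one_sub_tanh_sq (x : ℝ) : 1 - tanh x ^ 2 = (cosh x ^ 2)⁻¹ := by
  have := (cosh_pos x).ne'
  rw [tanh_eq_sinh_div_cosh]
  field_simp
  linear_combination cosh_sq_sub_sinh_sq x

lemma Real.hasDerivAt_tanh (x : ℝ) : HasDerivAt tanh (1 - tanh x ^ 2) x := by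
  have h : HasDerivAt (fun y => sinh y / cosh y) _ x :=
    (hasDerivAt_sinh x).div (hasDerivAt_cosh x) (cosh_pos x).ne'
  simp only [← tanh_eq_sinh_div_cosh] at h
  rwa [← sq, ← sq, cosh_sq_sub_sinh_sq, one_div, ← one_sub_tanh_sq] at h

lemma Fin.sum_ite_val_lt_neg {R : Type*} [CommRing R] {N j : ℕ} (hj : j ≤ N) (b : R) :
    ∑ i : Fin N, (if (i : ℕ) < j then b else -b) = -(((N : R) - 2 * j) * b) := by
  have hsplit (i : Fin N) :
      (if (i : ℕ) < j then b else -b) = 2 * (if (i : ℕ) < j then b else 0) - b := by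
    split_ifs <;> ring
  simp only [hsplit, Finset.sum_sub_distrib, ← Finset.mul_sum, Finset.sum_ite,
    Finset.sum_const_zero, Finset.sum_const, Fin.card_filter_val_lt, min_eq_right hj,
    Finset.card_univ, Fintype.card_fin, nsmul_eq_mul]
  ring

section solProfile

lemma solProfile_eq_mul_cosh_rpow (μ ω a x : ℝ) :
    solProfile μ ω a x =
      ((μ + 1) * ω) ^ (1 / (2 * μ)) * cosh (μ * √ω * (x - a)) ^ (-(1 / μ)) := by
  rw [solProfile, sech, one_div (cosh _), inv_rpow (cosh_pos _).le, ← rpow_neg (cosh_pos _).le]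

lemma solProfile_neg_center (μ ω a : ℝ) :
    solProfile μ ω (-a) = fun x => solProfile μ ω a (-x) := by
  ext x
  rw [solProfile, solProfile, sub_neg_eq_add, ← neg_neg (x + a), neg_add', mul_neg, sech, sech,
    cosh_neg]

lemma solProfile_neg_apply_zero (μ ω a : ℝ) : solProfile μ ω (-a) 0 = solProfile μ ω a 0 := by
  simp only [solProfile_neg_center, neg_zero]

lemma deriv_solProfile_neg_zero (μ ω a : ℝ) :
    deriv (solProfile μ ω (-a)) 0 = -deriv (solProfile μ ω a) 0 := by
  rw [solProfile_neg_center, deriv_comp_neg, neg_zero]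

variable {μ ω : ℝ}

lemma solProfile_pos (hμω : 0 < (μ + 1) * ω) (a x : ℝ) : 0 < solProfile μ ω a x := by
  rw [solProfile_eq_mul_cosh_rpow]
  exact mul_pos (rpow_pos_of_pos hμω _) (rpow_pos_of_pos (cosh_pos _) _)

lemma solProfile_rpow_two_mul (hμ : μ ≠ 0) (hμω : 0 ≤ (μ + 1) * ω) (a x : ℝ) :
    solProfile μ ω a x ^ (2 * μ) = (μ + 1) * ω * (1 - tanh (μ * √ω * (x - a)) ^ 2) := by
  have hc := (cosh_pos (μ * √ω * (x - a))).le
  rw [solProfile_eq_mul_cosh_rpow, mul_rpow (rpow_nonneg hμω _) (rpow_nonneg hc _),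
    ← rpow_mul hμω, ← rpow_mul hc, one_sub_tanh_sq]
  have e1 : 1 / (2 * μ) * (2 * μ) = 1 := by field_simp
  have e2 : -(1 / μ) * (2 * μ) = -(2 : ℕ) := by field_simp; norm_num
  rw [e1, e2, rpow_one, rpow_neg hc, rpow_natCast]

lemma hasDerivAt_solProfile (hμ : μ ≠ 0) (ω a x : ℝ) :
    HasDerivAt (solProfile μ ω a) (-√ω * tanh (μ * √ω * (x - a)) * solProfile μ ω a x) x := by
  have hu : HasDerivAt (fun y => μ * √ω * (y - a)) (μ * √ω) x := by
    simpa using ((hasDerivAt_id x).sub_const a).const_mul (μ * √ω)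
  have h := (hu.cosh.rpow_const (p := -(1 / μ)) (Or.inl (cosh_pos _).ne')).const_mul
    (((μ + 1) * ω) ^ (1 / (2 * μ)))
  rw [← funext (solProfile_eq_mul_cosh_rpow μ ω a)] at h
  refine h.congr_deriv ?_
  rw [solProfile_eq_mul_cosh_rpow, tanh_eq_sinh_div_cosh, rpow_sub_one (cosh_pos _).ne']
  field_simp

lemma deriv_solProfile (hμ : μ ≠ 0) (ω a : ℝ) :
    deriv (solProfile μ ω a) = fun x => -√ω * tanh (μ * √ω * (x - a)) * solProfile μ ω a x :=
  funext fun x => (hasDerivAt_solProfile hμ ω a x).deriv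

lemma hasDerivAt_deriv_solProfile (hμ : 0 < μ) (hω : 0 ≤ ω) (a x : ℝ) :
    HasDerivAt (deriv (solProfile μ ω a))
      (ω * solProfile μ ω a x - solProfile μ ω a x ^ (2 * μ) * solProfile μ ω a x) x := by
  have hu : HasDerivAt (fun y => μ * √ω * (y - a)) (μ * √ω) x := by
    simpa using ((hasDerivAt_id x).sub_const a).const_mul (μ * √ω)
  have h := ((Real.hasDerivAt_tanh _).comp x hu).mul (hasDerivAt_solProfile hμ.ne' ω a x)
  have hfun : deriv (solProfile μ ω a) =
      fun y => -√ω * ((tanh ∘ fun y => μ * √ω * (y - a)) y * solProfile μ ω a y) := by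
    rw [deriv_solProfile hμ.ne']; ext y; simp only [Function.comp_apply]; ring
  rw [hfun]
  refine (h.const_mul (-√ω)).congr_deriv ?_
  rw [solProfile_rpow_two_mul hμ.ne' (by positivity), Function.comp_apply]
  linear_combination (μ * (tanh (μ * √ω * (x - a)) ^ 2 - 1) + tanh (μ * √ω * (x - a)) ^ 2)
    * solProfile μ ω a x * Real.sq_sqrt hω

lemma solProfile_stationary (hμ : 0 < μ) (hω : 0 < ω) (a x : ℝ) :
    -deriv (deriv (solProfile μ ω a)) x
        - |solProfile μ ω a x| ^ (2 * μ) * solProfile μ ω a x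
      = -ω * solProfile μ ω a x := by
  rw [(hasDerivAt_deriv_solProfile hμ hω.le a x).deriv,
    abs_of_pos (solProfile_pos (by positivity) a x)]
  ring

lemma deriv_solProfile_zero (hμ : μ ≠ 0) (ω a : ℝ) :
    deriv (solProfile μ ω a) 0 = √ω * tanh (μ * √ω * a) * solProfile μ ω a 0 := by
  rw [(hasDerivAt_solProfile hμ ω a 0).deriv, zero_sub, mul_neg, tanh_neg]
  ring

end solProfile

open Complex in
lemma standingWave_of_stationary {f : ℝ → ℝ} {ω p x : ℝ} (hf : Differentiable ℝ f)
    (hf' : DifferentiableAt ℝ (deriv f) x)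
    (hstat : -deriv (deriv f) x - |f x| ^ p * f x = -ω * f x) (t : ℝ) :
    I * deriv (fun s : ℝ => exp (I * ω * s) * (f x : ℂ)) t
      = -deriv (deriv (fun y : ℝ => exp (I * ω * t) * (f y : ℂ))) x
        - ((‖exp (I * ω * t) * (f x : ℂ)‖ ^ p : ℝ) : ℂ) * (exp (I * ω * t) * (f x : ℂ)) := by
  have htime : HasDerivAt (fun s : ℝ => exp (I * ω * s) * (f x : ℂ))
      (I * ω * exp (I * ω * t) * f x) t := by
    refine ((((hasDerivAt_id t).ofReal_comp.const_mul (I * ω)).cexp).mul_const _).congr_deriv ?_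
    simp only [id, ofReal_one, mul_one]
    ring
  have hspace : deriv (fun y : ℝ => exp (I * ω * t) * (f y : ℂ))
      = fun y => exp (I * ω * t) * ((deriv f y : ℝ) : ℂ) :=
    funext fun y => ((hf y).hasDerivAt.ofReal_comp.const_mul _).deriv
  have hnorm : ‖exp (I * ω * t) * (f x : ℂ)‖ = |f x| := by
    rw [norm_mul, norm_real, Real.norm_eq_abs,
      show I * ω * t = ((ω * t : ℝ) : ℂ) * I by push_cast; ring, norm_exp_ofReal_mul_I, one_mul]
  rw [htime.deriv, hspace, (hf'.hasDerivAt.ofReal_comp.const_mul _).deriv, hnorm]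
  have hstatC := congrArg ((↑) : ℝ → ℂ) hstat
  push_cast at hstatC
  linear_combination (-exp (I * ω * t)) * hstatC + ω * exp (I * ω * t) * f x * I_mul_I

lemma tanh_mul_aCenter {μ α ω : ℝ} {N j : ℕ} (hμ : μ ≠ 0) (hd : 0 < (N : ℝ) - 2 * j)
    (hω : α ^ 2 / ((N : ℝ) - 2 * j) ^ 2 < ω) :
    ((N : ℝ) - 2 * j) * √ω * tanh (μ * √ω * aCenter μ α N j ω) = |α| := by
  have hω0 : 0 < ω := (div_nonneg (sq_nonneg α) (sq_nonneg _)).trans_lt hω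
  have hden : 0 < ((N : ℝ) - 2 * j) * √ω := mul_pos hd (sqrt_pos.2 hω0)
  have hlt : |α| < ((N : ℝ) - 2 * j) * √ω := by
    rw [← sqrt_sq hd.le, ← sqrt_mul (sq_nonneg _), lt_sqrt (abs_nonneg α), sq_abs]
    rwa [div_lt_iff₀ (by positivity), mul_comm] at hω
  set T := |α| / (((N : ℝ) - 2 * j) * √ω)
  have hT : T ∈ Set.Ioo (-1) 1 :=
    ⟨by linarith [div_nonneg (abs_nonneg α) hden.le], (div_lt_one hden).2 hlt⟩
  have hcenter : μ * √ω * aCenter μ α N j ω = Real.artanh T := by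
    rw [aCenter, artanh_eq_real_artanh (Set.Ioo_subset_Icc_self hT)]
    field_simp [(sqrt_pos.2 hω0).ne']
  rw [hcenter, Real.tanh_artanh hT]
  exact mul_div_cancel₀ |α| hden.ne'

lemma statState_eq_solProfile (μ α : ℝ) (N j : ℕ) (ω : ℝ) (i : Fin N) :
    ∃ c, statState μ α N j ω i = solProfile μ ω c := by
  unfold statState
  split_ifs <;> exact ⟨_, rfl⟩

lemma statState_apply_zero (μ α : ℝ) (N j : ℕ) (ω : ℝ) (i : Fin N) :
    statState μ α N j ω i 0 = solProfile μ ω (aCenter μ α N j ω) 0 := by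
  unfold statState
  split_ifs
  · rfl
  · exact solProfile_neg_apply_zero μ ω _

lemma deriv_statState_zero (μ α : ℝ) (N j : ℕ) (ω : ℝ) (i : Fin N) :
    deriv (statState μ α N j ω i) 0 =
      if (i : ℕ) < j then deriv (solProfile μ ω (aCenter μ α N j ω)) 0
      else -deriv (solProfile μ ω (aCenter μ α N j ω)) 0 := by
  unfold statState
  split_ifs
  · rfl
  · exact deriv_solProfile_neg_zero μ ω _

/-- for `N ≥ 3`, `μ > 0`, `α < 0`, `0 ≤ j ≤ ⌊(N-1)/2⌋` and `ω > α²/(N-2j)²`,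
the state `Φ_ω^j` satisfies the stationary NLS equation componentwise on `(0,∞)`, the continuity
and `δ`-vertex conditions of strength `α` at the vertex, and `e^{iωt} Φ_ω^j` is a standing-wave
solution of the time-dependent NLS on each edge. -/
theorem statState_is_standing_wave (N : ℕ) (hN : 3 ≤ N) (μ α : ℝ)
    (hμ : 0 < μ) (hα : α < 0) (j : ℕ) (hj : j ≤ (N - 1) / 2)
    (ω : ℝ) (hω : α ^ 2 / ((N : ℝ) - 2 * j) ^ 2 < ω) :
    (∀ i : Fin N, ∀ x : ℝ, 0 < x →
      - deriv (deriv (statState μ α N j ω i)) x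
          - |statState μ α N j ω i x| ^ (2 * μ) * statState μ α N j ω i x
        = -ω * statState μ α N j ω i x) ∧
    (∀ i k : Fin N, statState μ α N j ω i 0 = statState μ α N j ω k 0) ∧
    (∑ i : Fin N, deriv (statState μ α N j ω i) 0)
        = α * statState μ α N j ω ⟨0, by omega⟩ 0 ∧
    (∀ i : Fin N, ∀ x : ℝ, 0 < x → ∀ t : ℝ,
      Complex.I * deriv (fun s : ℝ =>
          Complex.exp (Complex.I * ω * s) * ((statState μ α N j ω i x : ℝ) : ℂ)) t
        = - deriv (deriv (fun y : ℝ =>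
              Complex.exp (Complex.I * ω * t) * ((statState μ α N j ω i y : ℝ) : ℂ))) x
          - ((‖Complex.exp (Complex.I * ω * t)
                * ((statState μ α N j ω i x : ℝ) : ℂ)‖ ^ (2 * μ) : ℝ) : ℂ)
            * (Complex.exp (Complex.I * ω * t) * ((statState μ α N j ω i x : ℝ) : ℂ))) := by
  have hd : (0 : ℝ) < N - 2 * j := by
    rw [sub_pos]; exact_mod_cast (show 2 * j < N by omega)
  have hω0 : 0 < ω := (div_nonneg (sq_nonneg α) (sq_nonneg _)).trans_lt hω
  refine ⟨fun i x _ => ?_, fun i k => by rw [statState_apply_zero, statState_apply_zero], ?_,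
    fun i x _ t => ?_⟩
  · obtain ⟨c, hc⟩ := statState_eq_solProfile μ α N j ω i
    rw [hc]
    exact solProfile_stationary hμ hω0 c x
  · simp_rw [deriv_statState_zero, Fin.sum_ite_val_lt_neg (by omega : j ≤ N),
      deriv_solProfile_zero hμ.ne', statState_apply_zero, ← mul_assoc,
      tanh_mul_aCenter hμ.ne' hd hω, abs_of_neg hα]
    ring
  · obtain ⟨c, hc⟩ := statState_eq_solProfile μ α N j ω i
    rw [hc]
    exact standingWave_of_stationary
      (fun y => (hasDerivAt_solProfile hμ.ne' ω c y).differentiableAt)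
      (hasDerivAt_deriv_solProfile hμ hω0.le c x).differentiableAt
      (solProfile_stationary hμ hω0 c x) t
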